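/- Let R be a Γ-graded ring. Then R is weakly graded unit-regular if and only if R is graded regular and the following holds: for every γ ∈ Γ and all idempotents e, f ∈ 𝒜 0 (e*e = e, f*f = f), if there exist x ∈ 𝒜 (-γ) and y ∈ 𝒜 γ with x*y = e and y*x = f, then there exist u, v ∈ R (not necessarily homogeneous) with u*v = 1 - e and v*u = 1 - f. -/
import Mathlib

/-- An element of `R` is homogeneous with respect to the grading `𝒜` if it lies in some
component `𝒜 γ`. -/
def IsHomogeneousElem {Γ R : Type*} [AddGroup Γ] [Ring R]
    (𝒜 : Γ → AddSubgroup R) (x : R) : Prop :=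
  ∃ γ : Γ, x ∈ 𝒜 γ

/-- `R` is weakly graded unit-regular: every homogeneous `x` admits a (not necessarily
homogeneous) unit `u` of `R` with `x*u*x = x`. -/
def WeaklyGradedUnitRegular {Γ R : Type*} [AddGroup Γ] [Ring R]
    (𝒜 : Γ → AddSubgroup R) : Prop :=
  ∀ x : R, IsHomogeneousElem 𝒜 x → ∃ u : Rˣ, x * (u : R) * x = x

/-- `R` is graded (von Neumann) regular: every homogeneous `x` admits a homogeneous `y`
with `x*y*x = x`. -/
def GradedRegular {Γ R : Type*} [AddGroup Γ] [Ring R]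
    (𝒜 : Γ → AddSubgroup R) : Prop :=
  ∀ γ : Γ, ∀ x ∈ 𝒜 γ, ∃ y : R, IsHomogeneousElem 𝒜 y ∧ x * y * x = x

open DirectSum

section ringlemmas

variable {S : Type*} [Ring S]

/-- Transitivity of isomorphism of idempotents. -/
lemma my_iso_trans {g h k u₁ v₁ u₂ v₂ : S} (hg : g * g = g) (hk : k * k = k)
    (h11 : u₁ * v₁ = g) (h12 : v₁ * u₁ = h) (h21 : u₂ * v₂ = h) (h22 : v₂ * u₂ = k) :
    ∃ u v : S, u * v = g ∧ v * u = k := by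
  refine ⟨u₁ * u₂, v₂ * v₁, ?_, ?_⟩
  · calc u₁ * u₂ * (v₂ * v₁) = u₁ * (u₂ * v₂) * v₁ := by noncomm_ring
      _ = u₁ * (v₁ * u₁) * v₁ := by rw [h21, h12]
      _ = (u₁ * v₁) * (u₁ * v₁) := by noncomm_ring
      _ = g := by rw [h11, hg]
  · calc v₂ * v₁ * (u₁ * u₂) = v₂ * (v₁ * u₁) * u₂ := by noncomm_ring
      _ = v₂ * (u₂ * v₂) * u₂ := by rw [h12, h21]
      _ = (v₂ * u₂) * (v₂ * u₂) := by noncomm_ring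
      _ = k := by rw [h22, hk]

/-- Normalizing an isomorphism between complements of idempotents. -/
lemma my_normalize {g h u v : S} (hg : g * g = g) (hh : h * h = h)
    (huv : u * v = g) (hvu : v * u = h) :
    (g * u * h) * (h * v * g) = g ∧ (h * v * g) * (g * u * h) = h := by
  constructor
  · calc (g * u * h) * (h * v * g) = g * (u * (h * h) * v) * g := by noncomm_ring
      _ = g * (u * (v * u) * v) * g := by rw [hh, hvu]
      _ = g * ((u * v) * (u * v)) * g := by noncomm_ring
      _ = g * (g * g) * g := by rw [huv]
      _ = g := by simp only [hg]
  · calc (h * v * g) * (g * u * h) = h * (v * (g * g) * u) * h := by noncomm_ring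
      _ = h * (v * (u * v) * u) * h := by rw [hg, huv]
      _ = h * ((v * u) * (v * u)) * h := by noncomm_ring
      _ = h * (h * h) * h := by rw [hvu]
      _ = h := by simp only [hh]

end ringlemmas

section helpers

variable {Γ R : Type*} [AddGroup Γ] [DecidableEq Γ] [Ring R]
  (𝒜 : Γ → AddSubgroup R) [GradedRing 𝒜]

lemma eq_zero_of_mem_ne {i j : Γ} (hij : i ≠ j) {x : R} (hi : x ∈ 𝒜 i) (hj : x ∈ 𝒜 j) :
    x = 0 := by
  have h1 : (decompose 𝒜 x j : R) = x := decompose_of_mem_same 𝒜 hj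
  have h2 : (decompose 𝒜 x j : R) = 0 := by
    rw [decompose_of_mem_ne 𝒜 hi hij]
  rw [h1] at h2; exact h2

lemma proj_triple {γ : Γ} {x : R} (hx : x ∈ 𝒜 γ) (u : R) :
    (decompose 𝒜 (x * u * x) γ : R) = x * (decompose 𝒜 u (-γ) : R) * x := by
  classical
  conv_lhs => rw [← DirectSum.sum_support_decompose 𝒜 u]
  rw [Finset.mul_sum, Finset.sum_mul, decompose_sum, DFinsupp.finset_sum_apply,
    AddSubmonoidClass.coe_finset_sum]
  have key : ∀ i, (decompose 𝒜 (x * (decompose 𝒜 u i : R) * x) γ : R)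
      = if i = -γ then x * (decompose 𝒜 u i : R) * x else 0 := by
    intro i
    have hm : x * (decompose 𝒜 u i : R) * x ∈ 𝒜 (γ + i + γ) :=
      SetLike.mul_mem_graded (SetLike.mul_mem_graded hx (SetLike.coe_mem _)) hx
    by_cases hi : i = -γ
    · subst hi
      rw [if_pos rfl]
      have : γ + -γ + γ = γ := by
        rw [add_neg_cancel, zero_add]
      rw [this] at hm
      exact decompose_of_mem_same 𝒜 hm
    · rw [if_neg hi]
      have hne : γ + i + γ ≠ γ := by
        intro h
        have h1 : γ + i = 0 := by
          apply add_right_cancel (b := γ); rw [h, zero_add]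
        exact hi (eq_neg_of_add_eq_zero_right h1)
      exact decompose_of_mem_ne 𝒜 hm hne
  calc (∑ i ∈ (decompose 𝒜 u).support, ((decompose 𝒜 (x * (decompose 𝒜 u i : R) * x)) γ : R))
      = ∑ i ∈ (decompose 𝒜 u).support, if i = -γ then x * (decompose 𝒜 u i : R) * x else 0 := by
        refine Finset.sum_congr rfl fun i _ => key i
    _ = x * (decompose 𝒜 u (-γ) : R) * x := by
        rw [Finset.sum_ite_eq' ((decompose 𝒜 u).support) (-γ)
          (fun i => x * (decompose 𝒜 u i : R) * x)]
        split
        · rfl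
        · next h =>
          rw [DFinsupp.notMem_support_iff.mp h]
          simp

end helpers

theorem weaklyGradedUnitRegular_iff_gradedRegular_and_weak_cancellation
    {Γ R : Type*} [AddGroup Γ] [DecidableEq Γ] [Ring R]
    (𝒜 : Γ → AddSubgroup R) [GradedRing 𝒜] :
    WeaklyGradedUnitRegular 𝒜 ↔
      (GradedRegular 𝒜 ∧
        ∀ γ : Γ, ∀ e ∈ 𝒜 (0 : Γ), ∀ f ∈ 𝒜 (0 : Γ), e * e = e → f * f = f →
          (∃ x ∈ 𝒜 (-γ), ∃ y ∈ 𝒜 γ, x * y = e ∧ y * x = f) →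
          ∃ u v : R, u * v = 1 - e ∧ v * u = 1 - f) := by
  constructor
  · intro h
    constructor
    · -- graded regular
      intro γ x hx
      obtain ⟨u, hu⟩ := h x ⟨γ, hx⟩
      refine ⟨(decompose 𝒜 (u : R) (-γ) : R), ⟨-γ, SetLike.coe_mem _⟩, ?_⟩
      calc x * (decompose 𝒜 (u : R) (-γ) : R) * x
          = (decompose 𝒜 (x * (u : R) * x) γ : R) := (proj_triple 𝒜 hx (u : R)).symm
        _ = (decompose 𝒜 x γ : R) := by rw [hu]
        _ = x := decompose_of_mem_same 𝒜 hx
    · -- weak cancellation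
      rintro γ e he f hf hee hff ⟨x, hx, y, hy, hxy, hyx⟩
      subst hxy; subst hyx
      set b : R := (x * y) * x * (y * x) with hbdef
      set a : R := (y * x) * y * (x * y) with hadef
      have hba : b * a = x * y := by
        rw [hbdef, hadef]
        calc ((x * y) * x * (y * x)) * ((y * x) * y * (x * y))
            = (x * y) * (x * ((y * x) * (y * x)) * y) * (x * y) := by noncomm_ring
          _ = (x * y) * (x * (y * x) * y) * (x * y) := by rw [hff]
          _ = (x * y) * ((x * y) * (x * y)) * (x * y) := by noncomm_ring
          _ = x * y := by simp only [hee]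
      have hab : a * b = y * x := by
        rw [hbdef, hadef]
        calc ((y * x) * y * (x * y)) * ((x * y) * x * (y * x))
            = (y * x) * (y * ((x * y) * (x * y)) * x) * (y * x) := by noncomm_ring
          _ = (y * x) * (y * (x * y) * x) * (y * x) := by rw [hee]
          _ = (y * x) * ((y * x) * (y * x)) * (y * x) := by noncomm_ring
          _ = y * x := by simp only [hff]
      have hfa : (y * x) * a = a := by
        rw [hadef]
        calc (y * x) * ((y * x) * y * (x * y))
            = ((y * x) * (y * x)) * (y * (x * y)) := by noncomm_ring
          _ = (y * x) * (y * (x * y)) := by rw [hff]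
          _ = (y * x) * y * (x * y) := by noncomm_ring
      have haba : a * b * a = a := by
        rw [mul_assoc, ← mul_assoc a b a, hab, hfa]
      -- a is homogeneous of degree γ
      have ha : a ∈ 𝒜 γ := by
        have hmem : (y * x) * y * (x * y) ∈ 𝒜 ((0 : Γ) + γ + 0) :=
          SetLike.mul_mem_graded (SetLike.mul_mem_graded hf hy) he
        have h0 : (0 : Γ) + γ + 0 = γ := by rw [zero_add, add_zero]
        rw [hadef]; rw [h0] at hmem; exact hmem
      obtain ⟨w, hw⟩ := h a ⟨γ, ha⟩
      set p : R := a * (w : R) with hpdef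
      set q : R := (w : R) * a with hqdef
      have hp2 : p * p = p := by
        rw [hpdef]
        calc (a * (w : R)) * (a * (w : R)) = (a * (w : R) * a) * (w : R) := by noncomm_ring
          _ = a * (w : R) := by rw [hw]
      have hq2 : q * q = q := by
        rw [hqdef]
        calc ((w : R) * a) * ((w : R) * a) = (w : R) * (a * (w : R) * a) := by noncomm_ring
          _ = (w : R) * a := by rw [hw]
      have heq : (x * y) * q = x * y := by
        rw [hqdef, ← hba]
        calc (b * a) * ((w : R) * a) = b * (a * (w : R) * a) := by noncomm_ring
          _ = b * a := by rw [hw]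
      have hqe : q * (x * y) = q := by
        rw [hqdef, ← hba]
        calc ((w : R) * a) * (b * a) = (w : R) * (a * b * a) := by noncomm_ring
          _ = (w : R) * a := by rw [haba]
      have hpf : p * (y * x) = y * x := by
        rw [hpdef, ← hab]
        calc (a * (w : R)) * (a * b) = (a * (w : R) * a) * b := by noncomm_ring
          _ = a * b := by rw [hw]
      have hfp : (y * x) * p = p := by
        rw [hpdef, ← hab]
        calc (a * b) * (a * (w : R)) = (a * b * a) * (w : R) := by noncomm_ring
          _ = a * (w : R) := by rw [haba]
      -- idempotents for complements
      have hg1 : (1 - x * y) * (1 - x * y) = 1 - x * y := by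
        calc (1 - x * y) * (1 - x * y) = 1 - x * y - x * y + (x * y) * (x * y) := by noncomm_ring
          _ = 1 - x * y - x * y + x * y := by rw [hee]
          _ = 1 - x * y := by abel
      have hk1 : (1 - p) * (1 - p) = 1 - p := by
        calc (1 - p) * (1 - p) = 1 - p - p + p * p := by noncomm_ring
          _ = 1 - p - p + p := by rw [hp2]
          _ = 1 - p := by abel
      have hk2 : (1 - y * x) * (1 - y * x) = 1 - y * x := by
        calc (1 - y * x) * (1 - y * x) = 1 - y * x - y * x + (y * x) * (y * x) := by noncomm_ring
          _ = 1 - y * x - y * x + y * x := by rw [hff]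
          _ = 1 - y * x := by abel
      have h1q2 : (1 - q) * (1 - q) = 1 - q := by
        calc (1 - q) * (1 - q) = 1 - q - q + q * q := by noncomm_ring
          _ = 1 - q - q + q := by rw [hq2]
          _ = 1 - q := by abel
      -- iso 1 : (1 - x*y) ≅ (1 - q)
      have h11 : (1 - q) * (1 - (x * y)) = 1 - x * y := by
        calc (1 - q) * (1 - (x * y)) = 1 - q - x * y + q * (x * y) := by noncomm_ring
          _ = 1 - q - x * y + q := by rw [hqe]
          _ = 1 - x * y := by abel
      have h12 : (1 - (x * y)) * (1 - q) = 1 - q := by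
        calc (1 - (x * y)) * (1 - q) = 1 - x * y - q + (x * y) * q := by noncomm_ring
          _ = 1 - x * y - q + x * y := by rw [heq]
          _ = 1 - q := by abel
      -- iso 2 : (1 - q) ≅ (1 - p)
      have h21 : ((1 - q) * (w : R)) * (((w⁻¹ : Rˣ) : R) * (1 - q)) = 1 - q := by
        calc ((1 - q) * (w : R)) * (((w⁻¹ : Rˣ) : R) * (1 - q))
            = (1 - q) * ((w : R) * ((w⁻¹ : Rˣ) : R)) * (1 - q) := by noncomm_ring
          _ = (1 - q) * (1 - q) := by rw [Units.mul_inv, mul_one]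
          _ = 1 - q := h1q2
      have h22 : (((w⁻¹ : Rˣ) : R) * (1 - q)) * ((1 - q) * (w : R)) = 1 - p := by
        calc (((w⁻¹ : Rˣ) : R) * (1 - q)) * ((1 - q) * (w : R))
            = ((w⁻¹ : Rˣ) : R) * ((1 - q) * (1 - q)) * (w : R) := by noncomm_ring
          _ = ((w⁻¹ : Rˣ) : R) * (1 - q) * (w : R) := by rw [h1q2]
          _ = ((w⁻¹ : Rˣ) : R) * (1 - (w : R) * a) * (w : R) := by rw [hqdef]
          _ = ((w⁻¹ : Rˣ) : R) * (w : R)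
              - (((w⁻¹ : Rˣ) : R) * (w : R)) * (a * (w : R)) := by noncomm_ring
          _ = 1 - a * (w : R) := by rw [Units.inv_mul, one_mul]
          _ = 1 - p := by rw [hpdef]
      -- iso 3 : (1 - p) ≅ (1 - y*x)
      have h31 : (1 - p) * (1 - (y * x)) = 1 - p := by
        calc (1 - p) * (1 - (y * x)) = 1 - p - y * x + p * (y * x) := by noncomm_ring
          _ = 1 - p - y * x + y * x := by rw [hpf]
          _ = 1 - p := by abel
      have h32 : (1 - (y * x)) * (1 - p) = 1 - y * x := by
        calc (1 - (y * x)) * (1 - p) = 1 - y * x - p + (y * x) * p := by noncomm_ring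
          _ = 1 - y * x - p + p := by rw [hfp]
          _ = 1 - y * x := by abel
      obtain ⟨u', v', hu'v', hv'u'⟩ := my_iso_trans hg1 hk1 h11 h12 h21 h22
      exact my_iso_trans hg1 hk2 hu'v' hv'u' h31 h32
  · rintro ⟨hreg, hcanc⟩ x ⟨γ, hx⟩
    by_cases hx0 : x = 0
    · exact ⟨1, by simp [hx0]⟩
    obtain ⟨y, ⟨δ, hy⟩, hxyx⟩ := hreg γ x hx
    have hδ : δ = -γ := by
      by_contra hne
      refine hx0 (eq_zero_of_mem_ne 𝒜 (i := γ + δ + γ) (j := γ) ?_ ?_ hx)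
      · intro hcontra
        have h1 : γ + δ = 0 := by
          apply add_right_cancel (b := γ); rw [hcontra, zero_add]
        exact hne (eq_neg_of_add_eq_zero_right h1)
      · rw [← hxyx]
        exact SetLike.mul_mem_graded (SetLike.mul_mem_graded hx hy) hx
    subst hδ
    set y' : R := y * x * y with hy'def
    have hy' : y' ∈ 𝒜 (-γ) := by
      have h0 : -γ + γ + -γ = -γ := by rw [neg_add_cancel, zero_add]
      rw [hy'def, ← h0]
      exact SetLike.mul_mem_graded (SetLike.mul_mem_graded hy hx) hy
    have hxy'x : x * y' * x = x := by
      rw [hy'def]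
      calc x * (y * x * y) * x = (x * y * x) * (y * x) := by noncomm_ring
        _ = x * (y * x) := by rw [hxyx]
        _ = x * y * x := by noncomm_ring
        _ = x := hxyx
    have hy'xy' : y' * x * y' = y' := by
      rw [hy'def]
      calc (y * x * y) * x * (y * x * y) = y * ((x * y * x) * (y * x)) * y := by noncomm_ring
        _ = y * (x * (y * x)) * y := by rw [hxyx]
        _ = y * (x * y * x) * y := by noncomm_ring
        _ = y * x * y := by rw [hxyx]
    set e : R := x * y' with hedef
    set f : R := y' * x with hfdef
    have hee : e * e = e := by
      rw [hedef]
      calc (x * y') * (x * y') = (x * y' * x) * y' := by noncomm_ring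
        _ = x * y' := by rw [hxy'x]
    have hff : f * f = f := by
      rw [hfdef]
      calc (y' * x) * (y' * x) = (y' * x * y') * x := by noncomm_ring
        _ = y' * x := by rw [hy'xy']
    have he : e ∈ 𝒜 (0 : Γ) := by
      have h0 : γ + -γ = 0 := add_neg_cancel γ
      rw [hedef, ← h0]
      exact SetLike.mul_mem_graded hx hy'
    have hf : f ∈ 𝒜 (0 : Γ) := by
      have h0 : -γ + γ = 0 := neg_add_cancel γ
      rw [hfdef, ← h0]
      exact SetLike.mul_mem_graded hy' hx
    obtain ⟨u, v, huv, hvu⟩ := hcanc (-γ) e he f hf hee hff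
      ⟨x, by rw [neg_neg]; exact hx, y', hy', hedef.symm, hfdef.symm⟩
    have hg1 : (1 - e) * (1 - e) = 1 - e := by
      calc (1 - e) * (1 - e) = 1 - e - e + e * e := by noncomm_ring
        _ = 1 - e - e + e := by rw [hee]
        _ = 1 - e := by abel
    have hh1 : (1 - f) * (1 - f) = 1 - f := by
      calc (1 - f) * (1 - f) = 1 - f - f + f * f := by noncomm_ring
        _ = 1 - f - f + f := by rw [hff]
        _ = 1 - f := by abel
    obtain ⟨hn1, hn2⟩ := my_normalize hg1 hh1 huv hvu
    set u₀ : R := (1 - e) * u * (1 - f) with hu0def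
    set v₀ : R := (1 - f) * v * (1 - e) with hv0def
    have hx1f : x * (1 - f) = 0 := by
      have hxf : x * f = x := by
        rw [hfdef]
        calc x * (y' * x) = x * y' * x := by noncomm_ring
          _ = x := hxy'x
      rw [mul_sub, mul_one, hxf, sub_self]
    have h1fy : (1 - f) * y' = 0 := by
      have hfy : f * y' = y' := by
        rw [hfdef]
        calc (y' * x) * y' = y' * x * y' := by noncomm_ring
          _ = y' := hy'xy'
      rw [sub_mul, one_mul, hfy, sub_self]
    have hy1e : y' * (1 - e) = 0 := by
      have hye : y' * e = y' := by
        rw [hedef]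
        calc y' * (x * y') = y' * x * y' := by noncomm_ring
          _ = y' := hy'xy'
      rw [mul_sub, mul_one, hye, sub_self]
    have h1ex : (1 - e) * x = 0 := by
      have hex : e * x = x := by
        rw [hedef]
        calc (x * y') * x = x * y' * x := by noncomm_ring
          _ = x := hxy'x
      rw [sub_mul, one_mul, hex, sub_self]
    have hxv0 : x * v₀ = 0 := by
      calc x * v₀ = (x * (1 - f)) * (v * (1 - e)) := by rw [hv0def]; noncomm_ring
        _ = 0 := by rw [hx1f, zero_mul]
    have hu0y : u₀ * y' = 0 := by
      calc u₀ * y' = ((1 - e) * u) * ((1 - f) * y') := by rw [hu0def]; noncomm_ring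
        _ = 0 := by rw [h1fy, mul_zero]
    have hyu0 : y' * u₀ = 0 := by
      calc y' * u₀ = (y' * (1 - e)) * (u * (1 - f)) := by rw [hu0def]; noncomm_ring
        _ = 0 := by rw [hy1e, zero_mul]
    have hv0x : v₀ * x = 0 := by
      calc v₀ * x = ((1 - f) * v) * ((1 - e) * x) := by rw [hv0def]; noncomm_ring
        _ = 0 := by rw [h1ex, mul_zero]
    have hst : (x + u₀) * (y' + v₀) = 1 := by
      calc (x + u₀) * (y' + v₀) = x * y' + x * v₀ + u₀ * y' + u₀ * v₀ := by noncomm_ring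
        _ = e + 0 + 0 + (1 - e) := by rw [hxv0, hu0y, hn1, hedef]
        _ = 1 := by abel
    have hts : (y' + v₀) * (x + u₀) = 1 := by
      calc (y' + v₀) * (x + u₀) = y' * x + y' * u₀ + v₀ * x + v₀ * u₀ := by noncomm_ring
        _ = f + 0 + 0 + (1 - f) := by rw [hyu0, hv0x, hn2, hfdef]
        _ = 1 := by abel
    refine ⟨⟨y' + v₀, x + u₀, hts, hst⟩, ?_⟩
    show x * (y' + v₀) * x = x
    calc x * (y' + v₀) * x = x * y' * x + x * v₀ * x := by noncomm_ring
      _ = x + 0 * x := by rw [hxy'x, hxv0]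
      _ = x := by rw [zero_mul, add_zero]
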